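/- The invariant M is preserved by unit-free equivalence: if x ≗° x̃ for unit-free compatible trees x, x̃, then M(x) = M(x̃), where M(x) = max{j : x has at least two leaves labelled by cells of dimension ≥ j} (and M(x) = −∞ if x has only one leaf). -/
import Mathlib


namespace Sesq

/-- `(𝒪ₙ, X)`-labelled trees: leaves labelled by cells of `X`, internal vertices
labelled by unit generators `u_i` or composition/whiskering generators `∘_{i,j}`. -/
inductive PTree (X : Type) : Type
  | leaf : X → PTree X
  | unit : ℕ → PTree X → PTree X
  | comp : ℕ → ℕ → PTree X → PTree X → PTree X

namespace PTree

variable {X Y : Type}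

/-- Dimension of a labelled tree. -/
def dimT (dX : X → ℕ) : PTree X → ℕ
  | leaf c => dX c
  | unit i _ => i
  | comp i j _ _ => max i j

/-- Well-formedness: labels have the appropriate dimensions. -/
def WF (dX : X → ℕ) : PTree X → Prop
  | leaf _ => True
  | unit i x => WF dX x ∧ dimT dX x + 1 = i
  | comp i j x y => WF dX x ∧ WF dX y ∧ dimT dX x = i ∧ dimT dX y = j ∧ 1 ≤ i ∧ 1 ≤ j

/-- Relabelling the leaves of a tree. -/
def mapTree (f : X → Y) : PTree X → PTree Y
  | leaf c => leaf (f c)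
  | unit i x => unit i (mapTree f x)
  | comp i j x y => comp i j (mapTree f x) (mapTree f y)

/-- A tree contains no `u`-labelled vertices. -/
def UnitFree : PTree X → Prop
  | leaf _ => True
  | unit _ _ => False
  | comp _ _ x y => UnitFree x ∧ UnitFree y

/-- The ordered list of leaves of a tree (increasing for the canonical linear order:
every leaf of the left subtree of `∘_{i,j}` is greater than every leaf of the right one). -/
def leaves : PTree X → List X
  | leaf c => [c]
  | unit _ x => leaves x
  | comp _ _ x y => leaves y ++ leaves x

/-- The cell dimension `cd(x)`: the maximum of the dimensions of the cells labelling leaves. -/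
def cdim (dX : X → ℕ) (x : PTree X) : ℕ :=
  ((leaves x).map dX).foldr max 0

/-- The leaves of dimension at least `M`, in the canonical order. -/
def leavesGe (dX : X → ℕ) (M : ℕ) (x : PTree X) : List X :=
  (leaves x).filter fun c => M ≤ dX c

/-- `M(x) = max { j : x has at least two leaves of dimension ≥ j }`, with `M(x) = ⊥ = -∞`
if `x` has only one leaf. -/
def Mval (dX : X → ℕ) (x : PTree X) : WithBot ℕ :=
  (((List.range (cdim dX x + 1)).filter
      fun j => 2 ≤ ((leaves x).filter fun c => j ≤ dX c).length).map
      (fun j => (j : WithBot ℕ))).foldr max ⊥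

/-- The set of values `m(v) = min i j` over `∘_{i,j}`-labelled internal vertices. -/
def mset : PTree X → Finset ℕ
  | leaf _ => ∅
  | unit _ x => mset x
  | comp i j x y => insert (min i j) (mset x ∪ mset y)

/-- `H(x)`, the number of distinct values of `m(v)` over internal `∘`-vertices of `x`. -/
def Hval (x : PTree X) : ℕ := (mset x).card

/-- The reduction `r(x)`, deleting unit-generated subtrees; `none` plays the role of `∅`. -/
def reduce : PTree X → Option (PTree X)
  | leaf c => some (leaf c)
  | unit _ _ => none
  | comp i j x y =>
    if i = j then
      match reduce x, reduce y with
      | none, r => r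
      | r, none => r
      | some a, some b => some (comp i j a b)
    else if i < j then
      match reduce x, reduce y with
      | none, r => r
      | _, none => none
      | some a, some b => some (comp i j a b)
    else
      match reduce x, reduce y with
      | r, none => r
      | none, _ => none
      | some a, some b => some (comp i j a b)

/-- The slice `σ^M_ℓ(w)`, where the leaf `ℓ ∈ L_{≥M}(w)` is specified by its index
`idx` in the ordered list `leavesGe dX M w`. -/
def slice (dX : X → ℕ) (M : ℕ) : PTree X → ℕ → PTree X
  | leaf c, _ => leaf c
  | unit i x, _ => unit i x
  | comp i j x y, idx =>
    if M ≤ min i j then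
      if idx < (leavesGe dX M y).length then slice dX M y idx
      else slice dX M x (idx - (leavesGe dX M y).length)
    else if i < j then
      comp i (dimT dX (slice dX M y idx)) x (slice dX M y idx)
    else
      comp (dimT dX (slice dX M x idx)) j (slice dX M x idx) y

/-- Grafting the chain of units `u_{a+1} → ⋯ → u_b` on top of `t`. -/
def graftUnits (t : PTree X) (a : ℕ) : ℕ → PTree X
  | 0 => t
  | b + 1 => if a < b + 1 then unit (b + 1) (graftUnits t a b) else t

/-- The root of `t` is not a unit vertex. -/
def notUnitRoot (t : PTree X) : Prop := ∀ i y, t ≠ unit i y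

/-- If the root of `t` is a `∘`-vertex, then its `m`-value is `< m`. -/
def smallRoot (m : ℕ) (t : PTree X) : Prop :=
  ∀ a b u v, t = comp a b u v → min a b < m

/-- The labelled-subtree relation: `IsSubtree s t` iff `s` is the full subtree of `t`
above some vertex. -/
inductive IsSubtree : PTree X → PTree X → Prop
  | refl (t) : IsSubtree t t
  | unit (i x s) : IsSubtree s x → IsSubtree s (PTree.unit i x)
  | left (i j x y s) : IsSubtree s x → IsSubtree s (PTree.comp i j x y)
  | right (i j x y s) : IsSubtree s y → IsSubtree s (PTree.comp i j x y)

end PTree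

/-- A precomputad: a set of cells with dimensions and source/target trees. -/
structure Precomputad where
  cells : Type
  dim : cells → ℕ
  csrc : cells → PTree cells
  ctgt : cells → PTree cells

namespace Precomputad

variable (P : Precomputad)

/-- The source map on labelled trees. -/
def srcT : PTree P.cells → PTree P.cells
  | .leaf c => P.csrc c
  | .unit _ x => x
  | .comp i j x y =>
    if i = j then srcT y
    else if i < j then .comp i (j - 1) x (srcT y)
    else .comp (i - 1) j (srcT x) y

/-- The target map on labelled trees. -/
def tgtT : PTree P.cells → PTree P.cells
  | .leaf c => P.ctgt c
  | .unit _ x => x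
  | .comp i j x y =>
    if i = j then tgtT y
    else if i < j then .comp i (j - 1) x (tgtT y)
    else .comp (i - 1) j (tgtT x) y

/-- Iterated source. -/
def srcIter (k : ℕ) : PTree P.cells → PTree P.cells := P.srcT^[k]

/-- Iterated target. -/
def tgtIter (k : ℕ) : PTree P.cells → PTree P.cells := P.tgtT^[k]

end Precomputad

open PTree

mutual

/-- `≗`-compatibility of labelled trees. -/
inductive Compat (P : Precomputad) : PTree P.cells → Prop
  | leaf (c) : Compat P (.leaf c)
  | unit {i : ℕ} {x} : Compat P x → dimT P.dim x + 1 = i → Compat P (.unit i x)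
  | comp {i j : ℕ} {x y} : Compat P x → Compat P y →
      dimT P.dim x = i → dimT P.dim y = j → 1 ≤ min i j →
      Rel P (P.srcIter (i - min i j + 1) x) (P.tgtIter (j - min i j + 1) y) →
      Compat P (.comp i j x y)

/-- The equivalence relation `≗` on compatible trees, generated by the relations `ℰₙ`
(units, associativity and congruence). -/
inductive Rel (P : Precomputad) : PTree P.cells → PTree P.cells → Prop
  | refl {x} : Compat P x → Rel P x x
  | symm {x y} : Rel P x y → Rel P y x
  | trans {x y z} : Rel P x y → Rel P y z → Rel P x z
  | congr_unit {k x x'} : Rel P x x' → Rel P (.unit k x) (.unit k x')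
  | congr_comp {i j x x' y y'} : Rel P x x' → Rel P y y' →
      Compat P (.comp i j x y) → Compat P (.comp i j x' y') →
      Rel P (.comp i j x y) (.comp i j x' y')
  | lam_unit {i k x y} : i ≤ k → Compat P x → Compat P y →
      dimT P.dim x + 1 = i → dimT P.dim y = k →
      Rel P x (P.tgtIter (k - i + 1) y) →
      Rel P (.comp i k (.unit i x) y) y
  | rho_unit {k i x y} : i ≤ k → Compat P x → Compat P y →
      dimT P.dim x = k → dimT P.dim y + 1 = i →
      Rel P (P.srcIter (k - i + 1) x) y →
      Rel P (.comp k i x (.unit i y)) x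
  | rho_push {i k x y} : i < k → Compat P x → Compat P y →
      dimT P.dim x = i → dimT P.dim y + 1 = k →
      Rel P (P.srcT x) (P.tgtIter (k - i) y) →
      Rel P (.comp i k x (.unit k y)) (.unit k (.comp i (k - 1) x y))
  | lam_push {k i x y} : i < k → Compat P x → Compat P y →
      dimT P.dim x + 1 = k → dimT P.dim y = i →
      Rel P (P.srcIter (k - i) x) (P.tgtT y) →
      Rel P (.comp k i (.unit k x) y) (.unit k (.comp (k - 1) i x y))
  | assoc_kkk {k x y z} : Compat P x → Compat P y → Compat P z →
      dimT P.dim x = k → dimT P.dim y = k → dimT P.dim z = k →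
      Rel P (P.srcT x) (P.tgtT y) → Rel P (P.srcT y) (P.tgtT z) →
      Rel P (.comp k k (.comp k k x y) z) (.comp k k x (.comp k k y z))
  | assoc_iik {i k x y z} : i < k → Compat P x → Compat P y → Compat P z →
      dimT P.dim x = i → dimT P.dim y = i → dimT P.dim z = k →
      Rel P (P.srcT x) (P.tgtT y) → Rel P (P.srcT y) (P.tgtIter (k - i + 1) z) →
      Rel P (.comp i k (.comp i i x y) z) (.comp i k x (.comp i k y z))
  | assoc_iki {i k x y z} : i < k → Compat P x → Compat P y → Compat P z →
      dimT P.dim x = i → dimT P.dim y = k → dimT P.dim z = i →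
      Rel P (P.srcT x) (P.tgtIter (k - i + 1) y) → Rel P (P.srcIter (k - i + 1) y) (P.tgtT z) →
      Rel P (.comp k i (.comp i k x y) z) (.comp i k x (.comp k i y z))
  | assoc_kii {i k x y z} : i < k → Compat P x → Compat P y → Compat P z →
      dimT P.dim x = k → dimT P.dim y = i → dimT P.dim z = i →
      Rel P (P.srcIter (k - i + 1) x) (P.tgtT y) → Rel P (P.srcT y) (P.tgtT z) →
      Rel P (.comp k i (.comp k i x y) z) (.comp k i x (.comp i i y z))
  | assoc_ikk {i k x y z} : i < k → Compat P x → Compat P y → Compat P z →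
      dimT P.dim x = i → dimT P.dim y = k → dimT P.dim z = k →
      Rel P (P.srcT x) (P.tgtIter (k - i + 1) y) → Rel P (P.srcT y) (P.tgtT z) →
      Rel P (.comp i k x (.comp k k y z)) (.comp k k (.comp i k x y) (.comp i k x z))
  | assoc_kki {i k x y z} : i < k → Compat P x → Compat P y → Compat P z →
      dimT P.dim x = k → dimT P.dim y = k → dimT P.dim z = i →
      Rel P (P.srcT x) (P.tgtT y) → Rel P (P.srcIter (k - i + 1) y) (P.tgtT z) →
      Rel P (.comp k i (.comp k k x y) z) (.comp k k (.comp k i x z) (.comp k i y z))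
  | assoc_ijk {i j k x y z} : i < j → j < k → Compat P x → Compat P y → Compat P z →
      dimT P.dim x = i → dimT P.dim y = j → dimT P.dim z = k →
      Rel P (P.srcT x) (P.tgtIter (j - i + 1) y) → Rel P (P.srcT y) (P.tgtIter (k - j + 1) z) →
      Rel P (.comp i k x (.comp j k y z)) (.comp j k (.comp i j x y) (.comp i k x z))
  | assoc_ikj {i j k x y z} : i < j → j < k → Compat P x → Compat P y → Compat P z →
      dimT P.dim x = i → dimT P.dim y = k → dimT P.dim z = j →
      Rel P (P.srcT x) (P.tgtIter (k - i + 1) y) → Rel P (P.srcIter (k - j + 1) y) (P.tgtT z) →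
      Rel P (.comp i k x (.comp k j y z)) (.comp k j (.comp i k x y) (.comp i j x z))
  | assoc_jki {i j k x y z} : i < j → j < k → Compat P x → Compat P y → Compat P z →
      dimT P.dim x = j → dimT P.dim y = k → dimT P.dim z = i →
      Rel P (P.srcT x) (P.tgtIter (k - j + 1) y) → Rel P (P.srcIter (k - i + 1) y) (P.tgtT z) →
      Rel P (.comp k i (.comp j k x y) z) (.comp j k (.comp j i x z) (.comp k i y z))
  | assoc_kji {i j k x y z} : i < j → j < k → Compat P x → Compat P y → Compat P z →
      dimT P.dim x = k → dimT P.dim y = j → dimT P.dim z = i →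
      Rel P (P.srcIter (k - j + 1) x) (P.tgtT y) → Rel P (P.srcIter (j - i + 1) y) (P.tgtT z) →
      Rel P (.comp k i (.comp k j x y) z) (.comp k j (.comp k i x z) (.comp j i y z))

end

mutual

/-- `≗°`-compatibility: compatibility with respect to the unit-free relations only. -/
inductive CompatO (P : Precomputad) : PTree P.cells → Prop
  | leaf (c) : CompatO P (.leaf c)
  | unit {i : ℕ} {x} : CompatO P x → dimT P.dim x + 1 = i → CompatO P (.unit i x)
  | comp {i j : ℕ} {x y} : CompatO P x → CompatO P y →
      dimT P.dim x = i → dimT P.dim y = j → 1 ≤ min i j →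
      RelO P (P.srcIter (i - min i j + 1) x) (P.tgtIter (j - min i j + 1) y) →
      CompatO P (.comp i j x y)

/-- The unit-free equivalence `≗°`, generated by the relations of `ℰₙ` not involving units. -/
inductive RelO (P : Precomputad) : PTree P.cells → PTree P.cells → Prop
  | refl {x} : CompatO P x → RelO P x x
  | symm {x y} : RelO P x y → RelO P y x
  | trans {x y z} : RelO P x y → RelO P y z → RelO P x z
  | congr_comp {i j x x' y y'} : RelO P x x' → RelO P y y' →
      CompatO P (.comp i j x y) → CompatO P (.comp i j x' y') →
      RelO P (.comp i j x y) (.comp i j x' y')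
  | assoc_kkk {k x y z} : CompatO P x → CompatO P y → CompatO P z →
      dimT P.dim x = k → dimT P.dim y = k → dimT P.dim z = k →
      RelO P (P.srcT x) (P.tgtT y) → RelO P (P.srcT y) (P.tgtT z) →
      RelO P (.comp k k (.comp k k x y) z) (.comp k k x (.comp k k y z))
  | assoc_iik {i k x y z} : i < k → CompatO P x → CompatO P y → CompatO P z →
      dimT P.dim x = i → dimT P.dim y = i → dimT P.dim z = k →
      RelO P (P.srcT x) (P.tgtT y) → RelO P (P.srcT y) (P.tgtIter (k - i + 1) z) →
      RelO P (.comp i k (.comp i i x y) z) (.comp i k x (.comp i k y z))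
  | assoc_iki {i k x y z} : i < k → CompatO P x → CompatO P y → CompatO P z →
      dimT P.dim x = i → dimT P.dim y = k → dimT P.dim z = i →
      RelO P (P.srcT x) (P.tgtIter (k - i + 1) y) → RelO P (P.srcIter (k - i + 1) y) (P.tgtT z) →
      RelO P (.comp k i (.comp i k x y) z) (.comp i k x (.comp k i y z))
  | assoc_kii {i k x y z} : i < k → CompatO P x → CompatO P y → CompatO P z →
      dimT P.dim x = k → dimT P.dim y = i → dimT P.dim z = i →
      RelO P (P.srcIter (k - i + 1) x) (P.tgtT y) → RelO P (P.srcT y) (P.tgtT z) →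
      RelO P (.comp k i (.comp k i x y) z) (.comp k i x (.comp i i y z))
  | assoc_ikk {i k x y z} : i < k → CompatO P x → CompatO P y → CompatO P z →
      dimT P.dim x = i → dimT P.dim y = k → dimT P.dim z = k →
      RelO P (P.srcT x) (P.tgtIter (k - i + 1) y) → RelO P (P.srcT y) (P.tgtT z) →
      RelO P (.comp i k x (.comp k k y z)) (.comp k k (.comp i k x y) (.comp i k x z))
  | assoc_kki {i k x y z} : i < k → CompatO P x → CompatO P y → CompatO P z →
      dimT P.dim x = k → dimT P.dim y = k → dimT P.dim z = i →
      RelO P (P.srcT x) (P.tgtT y) → RelO P (P.srcIter (k - i + 1) y) (P.tgtT z) →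
      RelO P (.comp k i (.comp k k x y) z) (.comp k k (.comp k i x z) (.comp k i y z))
  | assoc_ijk {i j k x y z} : i < j → j < k → CompatO P x → CompatO P y → CompatO P z →
      dimT P.dim x = i → dimT P.dim y = j → dimT P.dim z = k →
      RelO P (P.srcT x) (P.tgtIter (j - i + 1) y) → RelO P (P.srcT y) (P.tgtIter (k - j + 1) z) →
      RelO P (.comp i k x (.comp j k y z)) (.comp j k (.comp i j x y) (.comp i k x z))
  | assoc_ikj {i j k x y z} : i < j → j < k → CompatO P x → CompatO P y → CompatO P z →
      dimT P.dim x = i → dimT P.dim y = k → dimT P.dim z = j →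
      RelO P (P.srcT x) (P.tgtIter (k - i + 1) y) → RelO P (P.srcIter (k - j + 1) y) (P.tgtT z) →
      RelO P (.comp i k x (.comp k j y z)) (.comp k j (.comp i k x y) (.comp i j x z))
  | assoc_jki {i j k x y z} : i < j → j < k → CompatO P x → CompatO P y → CompatO P z →
      dimT P.dim x = j → dimT P.dim y = k → dimT P.dim z = i →
      RelO P (P.srcT x) (P.tgtIter (k - j + 1) y) → RelO P (P.srcIter (k - i + 1) y) (P.tgtT z) →
      RelO P (.comp k i (.comp j k x y) z) (.comp j k (.comp j i x z) (.comp k i y z))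
  | assoc_kji {i j k x y z} : i < j → j < k → CompatO P x → CompatO P y → CompatO P z →
      dimT P.dim x = k → dimT P.dim y = j → dimT P.dim z = i →
      RelO P (P.srcIter (k - j + 1) x) (P.tgtT y) → RelO P (P.srcIter (j - i + 1) y) (P.tgtT z) →
      RelO P (.comp k i (.comp k j x y) z) (.comp k j (.comp k i x z) (.comp j i y z))

end

mutual

/-- Trees in normal form: `m`-ordered, no edge `u → ∘`, and every `m`-constant
component in one of the two prescribed chain shapes. -/
inductive NF {X : Type} : PTree X → Prop
  | leaf (c : X) : NF (.leaf c)
  | unit (i : ℕ) (x : PTree X) : NF x → NF (.unit i x)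
  | compEq (k : ℕ) (x y : PTree X) : NF x → notUnitRoot x → smallRoot k x →
      ChainKK k y → NF (.comp k k x y)
  | compLt (i k : ℕ) (x y : PTree X) : i < k → NF x → notUnitRoot x → smallRoot i x →
      ChainA i k y → NF (.comp i k x y)
  | compGt (i k : ℕ) (x y : PTree X) : i < k → ChainB i k x → NF y → notUnitRoot y →
      smallRoot i y → NF (.comp k i x y)

/-- Continuation of an `m`-constant `∘_{k,k}`-chain in normal form. -/
inductive ChainKK {X : Type} : ℕ → PTree X → Prop
  | cons (k : ℕ) (x y : PTree X) : NF x → notUnitRoot x → smallRoot k x →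
      ChainKK k y → ChainKK k (.comp k k x y)
  | base (k : ℕ) (t : PTree X) : NF t → notUnitRoot t → smallRoot k t → ChainKK k t

/-- Continuation of the `∘_{i,k}`-phase of a mixed `m`-constant chain in normal form. -/
inductive ChainA {X : Type} : ℕ → ℕ → PTree X → Prop
  | cons (i k : ℕ) (x y : PTree X) : NF x → notUnitRoot x → smallRoot i x →
      ChainA i k y → ChainA i k (.comp i k x y)
  | toB (i k : ℕ) (t : PTree X) : ChainB i k t → ChainA i k t

/-- Continuation of the `∘_{k,i}`-phase of a mixed `m`-constant chain in normal form. -/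
inductive ChainB {X : Type} : ℕ → ℕ → PTree X → Prop
  | cons (i k : ℕ) (x y : PTree X) : ChainB i k x → NF y → notUnitRoot y →
      smallRoot i y → ChainB i k (.comp k i x y)
  | base (i k : ℕ) (t : PTree X) : NF t → notUnitRoot t → smallRoot i t → ChainB i k t

end

/-- A computad for the `n`-sesquicategory monad: cells of dimension `≤ n+1` with
compatible source/target trees satisfying the globularity relations up to `≗`. -/
structure Computad (n : ℕ) extends Precomputad where
  dim_le : ∀ c, dim c ≤ n + 1
  src_wf : ∀ c, 1 ≤ dim c → WF dim (csrc c)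
  tgt_wf : ∀ c, 1 ≤ dim c → WF dim (ctgt c)
  src_dim : ∀ c, 1 ≤ dim c → dimT dim (csrc c) + 1 = dim c
  tgt_dim : ∀ c, 1 ≤ dim c → dimT dim (ctgt c) + 1 = dim c
  src_compat : ∀ c, 1 ≤ dim c → Compat toPrecomputad (csrc c)
  tgt_compat : ∀ c, 1 ≤ dim c → Compat toPrecomputad (ctgt c)
  glob_s : ∀ c, 2 ≤ dim c →
    Rel toPrecomputad (toPrecomputad.srcT (csrc c)) (toPrecomputad.srcT (ctgt c))
  glob_t : ∀ c, 2 ≤ dim c →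
    Rel toPrecomputad (toPrecomputad.tgtT (csrc c)) (toPrecomputad.tgtT (ctgt c))

/-- A map of computads: a dimension-preserving map of cells commuting with
source and target up to `≗`. -/
structure CompHom {n : ℕ} (C D : Computad n) where
  f : C.cells → D.cells
  dim_eq : ∀ c, D.dim (f c) = C.dim c
  src_ok : ∀ c, 1 ≤ C.dim c →
    Rel D.toPrecomputad (D.csrc (f c)) (mapTree f (C.csrc c))
  tgt_ok : ∀ c, 1 ≤ C.dim c →
    Rel D.toPrecomputad (D.ctgt (f c)) (mapTree f (C.ctgt c))

end Sesq


namespace Sesq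

open PTree

variable {X : Type}

/-- Number of leaves of dimension at least `j`. -/
def countGe (dX : X → ℕ) (j : ℕ) (x : PTree X) : ℕ :=
  ((PTree.leaves x).filter fun c => j ≤ dX c).length

lemma countGe_comp (dX : X → ℕ) (m i k : ℕ) (x y : PTree X) :
    countGe dX m (PTree.comp i k x y) = countGe dX m y + countGe dX m x := by
  simp [countGe, PTree.leaves, List.filter_append]

lemma countGe_unit (dX : X → ℕ) (m i : ℕ) (x : PTree X) :
    countGe dX m (PTree.unit i x) = countGe dX m x := rfl

lemma foldr_max_eq (l : List ℕ) (e : ℕ) : l.foldr max e = max (l.foldr max 0) e := by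
  induction l with
  | nil => simp
  | cons a l ih => simp [ih]

lemma cdim_comp (dX : X → ℕ) (i k : ℕ) (x y : PTree X) :
    PTree.cdim dX (PTree.comp i k x y) = max (PTree.cdim dX x) (PTree.cdim dX y) := by
  simp only [PTree.cdim, PTree.leaves, List.map_append, List.foldr_append]
  rw [foldr_max_eq]
  omega

lemma dim_le_dimT {P : Precomputad} {t : PTree P.cells} (h : CompatO P t) :
    ∀ c ∈ PTree.leaves t, P.dim c ≤ PTree.dimT P.dim t := by
  induction t with
  | leaf c => simp [PTree.leaves, PTree.dimT]
  | unit i x ih =>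
    cases h with
    | unit hx hd =>
      intro c hc
      have := ih hx c hc
      simp only [PTree.dimT]
      omega
  | comp i k x y ihx ihy =>
    cases h with
    | comp hx hy hdx hdy hmin hrel =>
      intro c hc
      simp only [PTree.leaves, List.mem_append] at hc
      simp only [PTree.dimT]
      rcases hc with hc | hc
      · have := ihy hy c hc; omega
      · have := ihx hx c hc; omega

lemma countGe_eq_zero {P : Precomputad} {t : PTree P.cells} {m : ℕ}
    (h : CompatO P t) (hm : PTree.dimT P.dim t < m) : countGe P.dim m t = 0 := by
  rw [countGe, List.length_eq_zero_iff]
  rw [List.filter_eq_nil_iff]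
  intro c hc
  have := dim_le_dimT h c hc
  simp only [decide_eq_true_eq]
  omega

lemma countGe_pos {P : Precomputad} {t : PTree P.cells} {m : ℕ}
    (hu : PTree.UnitFree t) (h : CompatO P t) (hm : m ≤ PTree.dimT P.dim t) :
    1 ≤ countGe P.dim m t := by
  induction t with
  | leaf c =>
    simp only [PTree.dimT] at hm
    simp [countGe, PTree.leaves, hm]
  | unit i x ih => exact absurd hu (by simp [PTree.UnitFree])
  | comp i k x y ihx ihy =>
    cases h with
    | comp hx hy hdx hdy hmin hrel =>
      obtain ⟨hux, huy⟩ : PTree.UnitFree x ∧ PTree.UnitFree y := hu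
      simp only [PTree.dimT] at hm
      rw [countGe_comp]
      rcases le_or_gt m i with h1 | h1
      · have := ihx hux hx (hdx ▸ h1); omega
      · have h2 : m ≤ k := by omega
        have := ihy huy hy (hdy ▸ h2); omega

lemma cdim_eq_dimT {P : Precomputad} {t : PTree P.cells}
    (hu : PTree.UnitFree t) (h : CompatO P t) :
    PTree.cdim P.dim t = PTree.dimT P.dim t := by
  induction t with
  | leaf c => simp [PTree.cdim, PTree.leaves, PTree.dimT]
  | unit i x ih => exact absurd hu (by simp [PTree.UnitFree])
  | comp i k x y ihx ihy =>
    cases h with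
    | comp hx hy hdx hdy hmin hrel =>
      obtain ⟨hux, huy⟩ : PTree.UnitFree x ∧ PTree.UnitFree y := hu
      rw [cdim_comp, ihx hux hx, ihy huy hy, hdx, hdy]
      rfl

lemma dimT_relO {P : Precomputad} {a b : PTree P.cells} (h : RelO P a b) :
    PTree.dimT P.dim a = PTree.dimT P.dim b := by
  induction h using Sesq.RelO.rec (motive_1 := fun x _ => True) <;>
    first | trivial | (simp_all [PTree.dimT]; try omega)

lemma unitFree_relO {P : Precomputad} {a b : PTree P.cells} (h : RelO P a b) :
    PTree.UnitFree a ↔ PTree.UnitFree b := by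
  induction h using Sesq.RelO.rec (motive_1 := fun x _ => True) <;>
    first | trivial | (simp_all [PTree.UnitFree]; try tauto)

lemma countGe_facts {P : Precomputad} {t : PTree P.cells} (hu : PTree.UnitFree t)
    (h : CompatO P t) (m d : ℕ) (hd : PTree.dimT P.dim t = d) :
    (m ≤ d → 1 ≤ countGe P.dim m t) ∧ (d < m → countGe P.dim m t = 0) :=
  ⟨fun hm => countGe_pos hu h (hd ▸ hm), fun hm => countGe_eq_zero h (by omega)⟩

lemma min2_countGe_relO {P : Precomputad} {a b : PTree P.cells} (h : RelO P a b) :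
    PTree.UnitFree a → ∀ m, min 2 (countGe P.dim m a) = min 2 (countGe P.dim m b) := by
  induction h using Sesq.RelO.rec (motive_1 := fun x _ => True)
  case leaf => trivial
  case unit => trivial
  case comp => trivial
  case refl => exact fun _ _ => rfl
  case symm x y hr ih =>
    intro hu m
    exact (ih ((unitFree_relO hr).mpr hu) m).symm
  case trans x y z h1 h2 ih1 ih2 =>
    intro hu m
    exact (ih1 hu m).trans (ih2 ((unitFree_relO h1).mp hu) m)
  case congr_comp i j x x' y y' h1 h2 hc1 hc2 ih1 ih2 _ _ =>
    intro hu m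
    obtain ⟨hux, huy⟩ : PTree.UnitFree x ∧ PTree.UnitFree y := hu
    rw [countGe_comp, countGe_comp]
    have A := ih1 hux m
    have B := ih2 huy m
    omega
  case assoc_kkk k x y z hx hy hz hdx hdy hdz h1 h2 _ _ _ ih1 ih2 =>
    intro hu m
    simp only [countGe_comp]
    omega
  case assoc_iik i k x y z hik hx hy hz hdx hdy hdz h1 h2 _ _ _ ih1 ih2 =>
    intro hu m
    simp only [countGe_comp]
    omega
  case assoc_iki i k x y z hik hx hy hz hdx hdy hdz h1 h2 _ _ _ ih1 ih2 =>
    intro hu m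
    simp only [countGe_comp]
    omega
  case assoc_kii i k x y z hik hx hy hz hdx hdy hdz h1 h2 _ _ _ ih1 ih2 =>
    intro hu m
    simp only [countGe_comp]
    omega
  case assoc_ikk i k x y z hik hx hy hz hdx hdy hdz h1 h2 _ _ _ ih1 ih2 =>
    intro hu m
    obtain ⟨hux, huy, huz⟩ : PTree.UnitFree x ∧ PTree.UnitFree y ∧ PTree.UnitFree z := hu
    obtain ⟨px, zx⟩ := countGe_facts hux hx m i hdx
    obtain ⟨py, zy⟩ := countGe_facts huy hy m k hdy
    obtain ⟨pz, zz⟩ := countGe_facts huz hz m k hdz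
    simp only [countGe_comp]
    omega
  case assoc_kki i k x y z hik hx hy hz hdx hdy hdz h1 h2 _ _ _ ih1 ih2 =>
    intro hu m
    obtain ⟨⟨hux, huy⟩, huz⟩ : (PTree.UnitFree x ∧ PTree.UnitFree y) ∧ PTree.UnitFree z := hu
    obtain ⟨px, zx⟩ := countGe_facts hux hx m k hdx
    obtain ⟨py, zy⟩ := countGe_facts huy hy m k hdy
    obtain ⟨pz, zz⟩ := countGe_facts huz hz m i hdz
    simp only [countGe_comp]
    omega
  case assoc_ijk i j k x y z hij hjk hx hy hz hdx hdy hdz h1 h2 _ _ _ ih1 ih2 =>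
    intro hu m
    obtain ⟨hux, huy, huz⟩ : PTree.UnitFree x ∧ PTree.UnitFree y ∧ PTree.UnitFree z := hu
    obtain ⟨px, zx⟩ := countGe_facts hux hx m i hdx
    obtain ⟨py, zy⟩ := countGe_facts huy hy m j hdy
    obtain ⟨pz, zz⟩ := countGe_facts huz hz m k hdz
    simp only [countGe_comp]
    omega
  case assoc_ikj i j k x y z hij hjk hx hy hz hdx hdy hdz h1 h2 _ _ _ ih1 ih2 =>
    intro hu m
    obtain ⟨hux, huy, huz⟩ : PTree.UnitFree x ∧ PTree.UnitFree y ∧ PTree.UnitFree z := hu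
    obtain ⟨px, zx⟩ := countGe_facts hux hx m i hdx
    obtain ⟨py, zy⟩ := countGe_facts huy hy m k hdy
    obtain ⟨pz, zz⟩ := countGe_facts huz hz m j hdz
    simp only [countGe_comp]
    omega
  case assoc_jki i j k x y z hij hjk hx hy hz hdx hdy hdz h1 h2 _ _ _ ih1 ih2 =>
    intro hu m
    obtain ⟨⟨hux, huy⟩, huz⟩ : (PTree.UnitFree x ∧ PTree.UnitFree y) ∧ PTree.UnitFree z := hu
    obtain ⟨px, zx⟩ := countGe_facts hux hx m j hdx
    obtain ⟨py, zy⟩ := countGe_facts huy hy m k hdy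
    obtain ⟨pz, zz⟩ := countGe_facts huz hz m i hdz
    simp only [countGe_comp]
    omega
  case assoc_kji i j k x y z hij hjk hx hy hz hdx hdy hdz h1 h2 _ _ _ ih1 ih2 =>
    intro hu m
    obtain ⟨⟨hux, huy⟩, huz⟩ : (PTree.UnitFree x ∧ PTree.UnitFree y) ∧ PTree.UnitFree z := hu
    obtain ⟨px, zx⟩ := countGe_facts hux hx m k hdx
    obtain ⟨py, zy⟩ := countGe_facts huy hy m j hdy
    obtain ⟨pz, zz⟩ := countGe_facts huz hz m i hdz
    simp only [countGe_comp]
    omega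

end Sesq

namespace Sesq

/-- `M` is invariant under the unit-free equivalence `≗°`. -/
theorem Mval_eq_of_relO {n : ℕ} (C : Computad n) (x x' : PTree C.cells)
    (hux : PTree.UnitFree x) (hux' : PTree.UnitFree x')
    (hx : CompatO C.toPrecomputad x) (hx' : CompatO C.toPrecomputad x')
    (h : RelO C.toPrecomputad x x') :
    PTree.Mval C.dim x = PTree.Mval C.dim x' := by
  have hd : PTree.dimT C.dim x = PTree.dimT C.dim x' := dimT_relO h
  have hc : PTree.cdim C.dim x = PTree.cdim C.dim x' := by
    rw [cdim_eq_dimT hux hx, cdim_eq_dimT hux' hx', hd]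
  unfold PTree.Mval
  rw [hc]
  have heq : (List.range (PTree.cdim C.dim x' + 1)).filter
      (fun j => 2 ≤ ((PTree.leaves x).filter fun c => j ≤ C.dim c).length) =
    (List.range (PTree.cdim C.dim x' + 1)).filter
      (fun j => 2 ≤ ((PTree.leaves x').filter fun c => j ≤ C.dim c).length) := by
    apply List.filter_congr
    intro a _
    have key := min2_countGe_relO h hux a
    simp only [countGe] at key
    simp only [decide_eq_decide]
    omega
  rw [heq]

end Sesq
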